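/- arXiv:1702.02907 — 2 statements merged into one kernel-verified Lean document; each statement's English description precedes it below -/
import Mathlib

section
/- A polynomial p(x) of degree d ≥ 1 over GF(2) is irreducible if and only if p(x) divides x^(2^d) − x and gcd(p(x), x^(2^(d/q)) − x) = 1 for every prime divisor q of d. -/
open Polynomial

/-- A unit polynomial over GF(2) equals 1. -/
lemma unit_eq_one_gf2 {u : Polynomial (ZMod 2)} (h : IsUnit u) : u = 1 := by
  obtain ⟨r, hr, hru⟩ := Polynomial.isUnit_iff.mp h
  have hzmod : ∀ r : ZMod 2, r ≠ 0 → r = 1 := by decide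
  have hr1 : r = 1 := hzmod r hr.ne_zero
  rw [← hru, hr1, map_one]

/-- Mersenne divisibility: if `2^m - 1 ∣ 2^n - 1` with `0 < m`, then `m ∣ n`. -/
lemma mersenne_dvd_aux {m n : ℕ} (hm : 0 < m) (h : 2 ^ m - 1 ∣ 2 ^ n - 1) : m ∣ n := by
  set r := n % m with hr
  set q := n / m with hq
  have hn : n = m * q + r := (Nat.div_add_mod n m).symm
  have h1 : 2 ^ m - 1 ∣ 2 ^ (m * q) - 1 := by
    simpa [pow_mul] using Nat.sub_dvd_pow_sub_pow (2 ^ m) 1 q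
  have h3 : 2 ^ m - 1 ∣ 2 ^ r * (2 ^ (m * q) - 1) := Dvd.dvd.mul_left h1 _
  have hpow : (2:ℕ) ^ n = 2 ^ r * 2 ^ (m * q) := by
    rw [← pow_add]; congr 1; omega
  have h4 : 2 ^ r * (2 ^ (m * q) - 1) = 2 ^ n - 2 ^ r := by
    rw [Nat.mul_sub, mul_one, hpow]
  rw [h4] at h3
  have h5 : 2 ^ m - 1 ∣ 2 ^ r - 1 := by
    have hle1 : 1 ≤ (2:ℕ) ^ r := Nat.one_le_two_pow
    have hle2 : (2:ℕ) ^ r ≤ 2 ^ n := Nat.pow_le_pow_right (by norm_num) (by omega)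
    have := Nat.dvd_sub h h3
    have heq : (2 ^ n - 1) - (2 ^ n - 2 ^ r) = 2 ^ r - 1 := by omega
    rwa [heq] at this
  have hrm : r < m := Nat.mod_lt _ hm
  have hlt : 2 ^ r - 1 < 2 ^ m - 1 := by
    have := Nat.pow_lt_pow_right (a := 2) (by norm_num) hrm
    have : 1 ≤ (2:ℕ) ^ r := Nat.one_le_two_pow
    omega
  have h0 : 2 ^ r - 1 = 0 := Nat.eq_zero_of_dvd_of_lt h5 hlt
  have hr1 : (2:ℕ) ^ r = 1 := by
    have : 1 ≤ (2:ℕ) ^ r := Nat.one_le_two_pow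
    omega
  have : r = 0 := by
    by_contra hr0
    have : 1 < (2:ℕ) ^ r := Nat.one_lt_two_pow_iff.mpr hr0
    omega
  exact Nat.dvd_of_mod_eq_zero this

/-- Key fact: an irreducible polynomial `f` over GF(2) divides `X^(2^n) - X`
iff `deg f ∣ n`. -/
lemma irreducible_dvd_X_pow_sub_X_iff (f : Polynomial (ZMod 2)) (hf : Irreducible f)
    (n : ℕ) : f ∣ X ^ (2 ^ n) - X ↔ f.natDegree ∣ n := by
  haveI : Fact (Irreducible f) := ⟨hf⟩
  have hf0 : f ≠ 0 := hf.ne_zero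
  set m := f.natDegree with hm
  have hm0 : 0 < m := hf.natDegree_pos
  set K := AdjoinRoot f with hK
  let pb : PowerBasis (ZMod 2) K := AdjoinRoot.powerBasis hf0
  haveI : Module.Finite (ZMod 2) K := Module.Finite.of_basis pb.basis
  haveI : Fintype K := Module.fintypeOfFintype pb.basis
  have hcard : Fintype.card K = 2 ^ m := by
    rw [Module.card_fintype pb.basis, ZMod.card, Fintype.card_fin,
      AdjoinRoot.powerBasis_dim]
  -- Reduce divisibility to an equation on the root
  have hdvd_iff : f ∣ X ^ (2 ^ n) - X ↔
      (AdjoinRoot.root f) ^ (2 ^ n) = AdjoinRoot.root f := by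
    rw [← AdjoinRoot.mk_eq_zero, map_sub, map_pow, AdjoinRoot.mk_X, sub_eq_zero]
  rw [hdvd_iff]
  constructor
  · -- root fixed by Frobenius^n ⇒ m ∣ n
    intro hroot
    haveI : CharP K 2 :=
      charP_of_injective_algebraMap (algebraMap (ZMod 2) K).injective 2
    haveI : ExpChar K 2 := ExpChar.prime Nat.prime_two
    -- every element of K is fixed by x ↦ x^(2^n)
    have key : ∀ x : K, x ^ (2 ^ n) = x := by
      intro x
      obtain ⟨g, rfl⟩ := AdjoinRoot.mk_surjective (g := f) x
      have hx : AdjoinRoot.mk f g = eval₂ (algebraMap (ZMod 2) K)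
          (AdjoinRoot.root f) g := by
        rw [← Polynomial.aeval_def, AdjoinRoot.aeval_eq]
      rw [hx, ← iterateFrobenius_def (R := K) 2 n, hom_eval₂]
      have hcomp : (iterateFrobenius K 2 n).comp (algebraMap (ZMod 2) K) =
          algebraMap (ZMod 2) K := RingHom.ext_zmod _ _
      rw [hcomp, iterateFrobenius_def, hroot]
    -- use a generator of the (cyclic) unit group
    obtain ⟨g, hg⟩ := IsCyclic.exists_generator (α := Kˣ)
    have hord : orderOf g = 2 ^ m - 1 := by
      rw [orderOf_eq_card_of_forall_mem_zpowers hg, Nat.card_eq_fintype_card,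
        Fintype.card_units, hcard]
    have hgpow : g ^ (2 ^ n - 1) = 1 := by
      have hgK : (g : K) ^ (2 ^ n) = g := key g
      have h1 : (g : K) ^ (2 ^ n - 1) * g = (g : K) ^ (2 ^ n) := by
        rw [← pow_succ]
        congr 1
        have : 1 ≤ 2 ^ n := Nat.one_le_two_pow
        omega
      have h2 : (g : K) ^ (2 ^ n - 1) * g = 1 * g := by
        rw [h1, hgK, one_mul]
      have h3 : (g : K) ^ (2 ^ n - 1) = 1 := mul_right_cancel₀ (Units.ne_zero g) h2
      ext
      push_cast
      exact h3
    have hdvd : 2 ^ m - 1 ∣ 2 ^ n - 1 := by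
      rw [← hord]
      exact orderOf_dvd_of_pow_eq_one hgpow
    exact mersenne_dvd_aux hm0 hdvd
  · -- m ∣ n ⇒ root^(2^n) = root, since x^(2^m) = x for all x
    rintro ⟨k, rfl⟩
    have key : ∀ (j : ℕ) (x : K), x ^ (2 ^ (m * j)) = x := by
      intro j
      induction j with
      | zero => intro x; simp
      | succ j ih =>
        intro x
        have : m * (j + 1) = m * j + m := by ring
        rw [this, pow_add, pow_mul, ih, ← hcard, FiniteField.pow_card]
    exact key k _

/-- Rabin/Ben-Or irreducibility criterion over GF(2): a polynomial `p` of degree `d ≥ 1`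
is irreducible iff `p ∣ X^(2^d) - X` and `gcd (p, X^(2^(d/q)) - X) = 1` for every
prime divisor `q` of `d`. -/
theorem stmt_1 (d : ℕ) (hd : 1 ≤ d) (p : Polynomial (ZMod 2)) (hdeg : p.natDegree = d) :
    Irreducible p ↔
      (p ∣ X ^ (2 ^ d) - X ∧
        ∀ q : ℕ, q.Prime → q ∣ d →
          EuclideanDomain.gcd p (X ^ (2 ^ (d / q)) - X) = 1) := by
  have hp0 : p ≠ 0 := by
    intro h
    rw [h, natDegree_zero] at hdeg
    omega
  constructor
  · intro hp
    constructor
    · exact (irreducible_dvd_X_pow_sub_X_iff p hp d).mpr (by rw [hdeg])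
    · intro q hq hqd
      set g : Polynomial (ZMod 2) := X ^ (2 ^ (d / q)) - X with hg
      set G := EuclideanDomain.gcd p g with hG
      have hGp : G ∣ p := EuclideanDomain.gcd_dvd_left p g
      obtain ⟨e, he⟩ := hGp
      rcases hp.isUnit_or_isUnit he with hu | hu
      · exact unit_eq_one_gf2 hu
      · exfalso
        -- p is associated to G, so p divides g
        have hpG : p ∣ G := by
          obtain ⟨u, rfl⟩ := hu
          exact ⟨↑u⁻¹, by rw [he, mul_assoc, Units.mul_inv, mul_one]⟩
        have hpg : p ∣ g := hpG.trans (EuclideanDomain.gcd_dvd_right p g)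
        have hdvd : d ∣ d / q :=
          hdeg ▸ (irreducible_dvd_X_pow_sub_X_iff p hp (d / q)).mp hpg
        have hlt : d / q < d := Nat.div_lt_self (by omega) hq.one_lt
        have hq0 : 0 < d / q := Nat.div_pos (Nat.le_of_dvd (by omega) hqd) hq.pos
        have := Nat.le_of_dvd hq0 hdvd
        omega
  · rintro ⟨h1, h2⟩
    have hpu : ¬IsUnit p := by
      intro hu
      have := unit_eq_one_gf2 hu
      rw [this, natDegree_one] at hdeg
      omega
    obtain ⟨f, hf, hfp⟩ := WfDvdMonoid.exists_irreducible_factor hpu hp0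
    set m := f.natDegree with hm
    have hmd : m ∣ d :=
      (irreducible_dvd_X_pow_sub_X_iff f hf d).mp (hfp.trans h1)
    have hm0 : 0 < m := hf.natDegree_pos
    by_cases hmeq : m = d
    · -- f has full degree, so p is a unit multiple of f
      obtain ⟨c, hc⟩ := hfp
      have hc0 : c ≠ 0 := by
        intro h
        rw [h, mul_zero] at hc
        exact hp0 hc
      have hdegc : c.natDegree = 0 := by
        have := Polynomial.natDegree_mul hf.ne_zero hc0
        rw [← hc, hdeg, ← hm, hmeq] at this
        omega
      have hcu : IsUnit c := by
        rw [Polynomial.eq_C_of_natDegree_eq_zero hdegc]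
        refine Polynomial.isUnit_C.mpr (isUnit_iff_ne_zero.mpr ?_)
        intro h
        exact hc0 (by rw [Polynomial.eq_C_of_natDegree_eq_zero hdegc, h, map_zero])
      have hassoc : Associated f p := ⟨hcu.unit, by rw [IsUnit.unit_spec]; exact hc.symm⟩
      exact hassoc.irreducible hf
    · -- f has degree a proper divisor of d: contradiction with the gcd conditions
      exfalso
      have hmltd : m < d := lt_of_le_of_ne (Nat.le_of_dvd (by omega) hmd) hmeq
      obtain ⟨k, hk⟩ := hmd
      have hk1 : k ≠ 1 := by
        intro h
        rw [h, mul_one] at hk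
        omega
      obtain ⟨q, hq, hqk⟩ := Nat.exists_prime_and_dvd hk1
      have hqd : q ∣ d := hk ▸ Dvd.dvd.mul_left hqk m
      obtain ⟨t, ht⟩ := hqk
      have hmdq : m ∣ d / q := by
        refine ⟨t, ?_⟩
        have : d = q * (m * t) := by rw [hk, ht]; ring
        rw [this, Nat.mul_div_cancel_left _ hq.pos]
      have hfdvd : f ∣ X ^ (2 ^ (d / q)) - X :=
        (irreducible_dvd_X_pow_sub_X_iff f hf (d / q)).mpr hmdq
      have hfgcd : f ∣ EuclideanDomain.gcd p (X ^ (2 ^ (d / q)) - X) :=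
        EuclideanDomain.dvd_gcd hfp hfdvd
      rw [h2 q hq hqd] at hfgcd
      exact hf.not_isUnit (isUnit_of_dvd_one hfgcd)
end

section
/- If a single verifier check time is exponentially distributed with rate λ₀ on [0,∞) and the attacker hides during the deterministic intervals [kT₁, kT₁ + βT₁) for all k ≥ 0, then the probability that the check falls in a hidden interval tends to β as λ₀ → 0. -/
open Filter MeasureTheory Set Real

private lemma aux_ico (lam a b : ℝ) (hab : a ≤ b) :
    ∫ x in Set.Ico a b, lam * Real.exp (-(lam * x)) =
      Real.exp (-(lam * a)) - Real.exp (-(lam * b)) := by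
  rw [MeasureTheory.integral_Ico_eq_integral_Ioo, ← MeasureTheory.integral_Ioc_eq_integral_Ioo,
    ← intervalIntegral.integral_of_le hab]
  have : ∫ x in a..b, lam * Real.exp (-(lam * x)) =
      (fun y => -Real.exp (-(lam * y))) b - (fun y => -Real.exp (-(lam * y))) a := by
    apply intervalIntegral.integral_eq_sub_of_hasDerivAt
    · intro x _
      have h1 : HasDerivAt (fun y : ℝ => -(lam * y)) (-lam) x := by
        exact ((hasDerivAt_id x).const_mul lam).neg.congr_deriv (by ring)
      have h2 := (Real.hasDerivAt_exp (-(lam * x))).comp x h1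
      have := h2.neg
      convert this using 1
      · funext y; rfl
      · ring
    · exact (Continuous.intervalIntegrable (by continuity) a b)
  rw [this]; ring

private lemma aux_slope (c : ℝ) :
    Tendsto (fun lam : ℝ => (1 - Real.exp (-(lam * c))) / lam)
      (nhdsWithin 0 {(0:ℝ)}ᶜ) (nhds c) := by
  have hf : HasDerivAt (fun lam : ℝ => 1 - Real.exp (-(lam * c))) c 0 := by
    have h1 : HasDerivAt (fun lam : ℝ => -(lam * c)) (-c) 0 := by
      exact ((hasDerivAt_id (0:ℝ)).mul_const c).neg.congr_deriv (by ring)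
    have h2 := (Real.hasDerivAt_exp (-(0 * c))).comp 0 h1
    have h3 := h2.const_sub 1
    exact h3.congr_deriv (by simp)
  have := hasDerivAt_iff_tendsto_slope.mp hf
  apply this.congr'
  filter_upwards [self_mem_nhdsWithin] with lam hlam
  simp [slope_def_field]

/-- If a single verifier check time `X` is exponentially distributed with rate `λ₀`
(density `λ₀ e^{−λ₀ x}` on `[0,∞)`) and the attacker hides during the intervals
`[kT₁, kT₁ + βT₁)` for all `k ≥ 0`, then `P(X ∈ H) = ∫_H λ₀ e^{−λ₀x} dx` tends to `β`
as `λ₀ → 0⁺`. -/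
theorem stmt_12 (T₁ β : ℝ) (hT₁ : 0 < T₁) (hβ0 : 0 ≤ β) (hβ1 : β ≤ 1) :
    Tendsto
      (fun lam : ℝ =>
        ∫ x in (⋃ k : ℕ, Set.Ico ((k : ℝ) * T₁) ((k : ℝ) * T₁ + β * T₁)),
          lam * Real.exp (-(lam * x)))
      (nhdsWithin 0 (Set.Ioi 0)) (nhds β) := by
  have key : ∀ lam : ℝ, 0 < lam →
      (∫ x in (⋃ k : ℕ, Set.Ico ((k : ℝ) * T₁) ((k : ℝ) * T₁ + β * T₁)),
          lam * Real.exp (-(lam * x))) =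
        (1 - Real.exp (-(lam * (β * T₁)))) / (1 - Real.exp (-(lam * T₁))) := by
    intro lam hlam
    set r : ℝ := Real.exp (-(lam * T₁)) with hr
    have hr1 : r < 1 := by
      rw [hr, Real.exp_lt_one_iff]
      nlinarith
    have hr0 : 0 ≤ r := Real.exp_nonneg _
    have hmeas : ∀ k : ℕ, MeasurableSet (Set.Ico ((k : ℝ) * T₁) ((k : ℝ) * T₁ + β * T₁)) :=
      fun k => measurableSet_Ico
    have hdisj : Pairwise (Function.onFun Disjoint
        fun k : ℕ => Set.Ico ((k : ℝ) * T₁) ((k : ℝ) * T₁ + β * T₁)) := by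
      intro i j hij
      rw [Function.onFun, Set.Ico_disjoint_Ico]
      rcases lt_or_gt_of_ne hij with h | h
      · have : (i : ℝ) + 1 ≤ (j : ℝ) := by exact_mod_cast h
        calc min ((i:ℝ) * T₁ + β * T₁) ((j:ℝ) * T₁ + β * T₁) ≤ (i:ℝ) * T₁ + β * T₁ :=
              min_le_left _ _
          _ ≤ max ((i:ℝ) * T₁) ((j:ℝ) * T₁) := le_trans (by nlinarith) (le_max_right _ _)
      · have : (j : ℝ) + 1 ≤ (i : ℝ) := by exact_mod_cast h
        calc min ((i:ℝ) * T₁ + β * T₁) ((j:ℝ) * T₁ + β * T₁) ≤ (j:ℝ) * T₁ + β * T₁ :=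
              min_le_right _ _
          _ ≤ max ((i:ℝ) * T₁) ((j:ℝ) * T₁) := le_trans (by nlinarith) (le_max_left _ _)
    have hint : IntegrableOn (fun x => lam * Real.exp (-(lam * x)))
        (⋃ k : ℕ, Set.Ico ((k : ℝ) * T₁) ((k : ℝ) * T₁ + β * T₁)) := by
      have h1 : IntegrableOn (fun x : ℝ => Real.exp (-lam * x)) (Set.Ioi (-1)) :=
        exp_neg_integrableOn_Ioi (-1) hlam
      have h2 : IntegrableOn (fun x : ℝ => lam * Real.exp (-(lam * x))) (Set.Ioi (-1)) := by
        simpa [neg_mul, IntegrableOn] using h1.const_mul lam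
      apply h2.mono_set
      intro x hx
      simp only [Set.mem_iUnion, Set.mem_Ico] at hx
      obtain ⟨k, hk1, _⟩ := hx
      have : (0:ℝ) ≤ (k : ℝ) * T₁ := by positivity
      simp only [Set.mem_Ioi]; linarith
    rw [MeasureTheory.integral_iUnion hmeas hdisj hint]
    have hterm : ∀ k : ℕ,
        (∫ x in Set.Ico ((k : ℝ) * T₁) ((k : ℝ) * T₁ + β * T₁), lam * Real.exp (-(lam * x))) =
          (1 - Real.exp (-(lam * (β * T₁)))) * r ^ k := by
      intro k
      rw [aux_ico lam _ _ (by nlinarith)]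
      have hk : Real.exp (-(lam * ((k : ℝ) * T₁))) = r ^ k := by
        rw [hr, ← Real.exp_nat_mul]
        ring_nf
      rw [show -(lam * ((k : ℝ) * T₁ + β * T₁)) =
          -(lam * ((k : ℝ) * T₁)) + -(lam * (β * T₁)) by ring, Real.exp_add, hk]
      ring
    rw [tsum_congr hterm, tsum_mul_left, tsum_geometric_of_lt_one hr0 hr1]
    rw [div_eq_mul_inv]
  have hmain : Tendsto
      (fun lam : ℝ => (1 - Real.exp (-(lam * (β * T₁)))) / (1 - Real.exp (-(lam * T₁))))
      (nhdsWithin 0 (Set.Ioi 0)) (nhds β) := by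
    have hsub : nhdsWithin (0:ℝ) (Set.Ioi 0) ≤ nhdsWithin 0 {(0:ℝ)}ᶜ :=
      nhdsWithin_mono 0 (fun x hx => ne_of_gt hx)
    have h1 := (aux_slope (β * T₁)).mono_left hsub
    have h2 := (aux_slope T₁).mono_left hsub
    have hdiv := h1.div h2 (by positivity)
    have hval : β * T₁ / T₁ = β := by field_simp
    rw [hval] at hdiv
    apply hdiv.congr'
    filter_upwards [self_mem_nhdsWithin] with lam hlam
    have hlam' : lam ≠ 0 := ne_of_gt hlam
    simp only [Pi.div_apply]
    rw [div_div_div_eq, mul_comm (1 - Real.exp (-(lam * (β * T₁)))) lam,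
      mul_div_mul_left _ _ hlam']
  exact hmain.congr' (by
    filter_upwards [self_mem_nhdsWithin] with lam hlam
    exact (key lam hlam).symm) |>.mono_left le_rfl
end
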